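/- The function $F(u) = 1 - \exp\left(-\lambda\int_0^{\kappa(u)}\cos(\varphi)\left(1 - e^{-\frac{\mu}{\pi}\arcsin\left(\sqrt{1-\cos^2(\kappa(u))\sec^2(\varphi)}\right)}\right)d\varphi\right)$, with $\kappa(u) = \arccos\left(\frac{r_o^2+r_e^2-u^2}{2 r_o r_e}\right)$, is a valid cumulative distribution function on $[r_o - r_e, \sqrt{r_o^2 - r_e^2}]$ for the distance to the nearest satellite conditional on at least one being visible only up to the defect $F(\sqrt{r_o^2-r_e^2}) < 1$; in particular $F$ is continuous, nondecreasing in $u$ on this interval, and $F(r_o - r_e) = 0$. -/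

import Mathlib

set_option maxHeartbeats 1000000


open Real

/-- Polar angle of the cap at distance `u` (law of cosines). -/
noncomputable def capAngle (ro re u : ℝ) : ℝ :=
  Real.arccos ((ro ^ 2 + re ^ 2 - u ^ 2) / (2 * ro * re))

/-- CDF of the distance to the nearest satellite in the Cox model. -/
noncomputable def nearestCDF (lam mu ro re u : ℝ) : ℝ :=
  1 - Real.exp (-(lam * ∫ v in (0 : ℝ)..(capAngle ro re u),
    Real.cos v * (1 - Real.exp (-(mu / π) *
      Real.arcsin (Real.sqrt (1 - Real.cos (capAngle ro re u) ^ 2 * (1 / Real.cos v) ^ 2))))))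

lemma antitone_arccos : Antitone Real.arccos := by
  intro x y h
  simp only [Real.arccos_eq_pi_div_two_sub_arcsin]
  have := Real.monotone_arcsin h
  linarith

/-- `F(u)` is continuous and nondecreasing on
`[r_o - r_e, √(r_o² - r_e²)]`, vanishes at the lower endpoint, and has a defect at
the upper endpoint: `F(√(r_o² - r_e²)) < 1`. -/
theorem nearestCDF_properties (lam mu ro re : ℝ)
    (hre : 0 < re) (hro : re < ro) (hlam : 0 < lam) (hmu : 0 < mu) :
    ContinuousOn (nearestCDF lam mu ro re)
      (Set.Icc (ro - re) (Real.sqrt (ro ^ 2 - re ^ 2))) ∧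
    MonotoneOn (nearestCDF lam mu ro re)
      (Set.Icc (ro - re) (Real.sqrt (ro ^ 2 - re ^ 2))) ∧
    nearestCDF lam mu ro re (ro - re) = 0 ∧
    nearestCDF lam mu ro re (Real.sqrt (ro ^ 2 - re ^ 2)) < 1 := by
  have hro0 : 0 < ro := hre.trans hro
  set c : ℝ := re / ro with hcdef
  have hc0 : 0 < c := div_pos hre hro0
  have hc1 : c < 1 := (div_lt_one hro0).2 hro
  set A : ℝ → ℝ := fun u => (ro ^ 2 + re ^ 2 - u ^ 2) / (2 * ro * re) with hAdef
  set S : Set ℝ := Set.Icc (ro - re) (Real.sqrt (ro ^ 2 - re ^ 2)) with hSdef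
  have hsq : (0:ℝ) ≤ ro ^ 2 - re ^ 2 := by nlinarith
  -- bounds on A on S
  have hAc : ∀ u ∈ S, c ≤ A u := by
    intro u hu
    have hu2 : u ^ 2 ≤ ro ^ 2 - re ^ 2 := by
      have h0 : 0 ≤ u := le_trans (by linarith) hu.1
      have h2 : u ^ 2 ≤ Real.sqrt (ro ^ 2 - re ^ 2) ^ 2 := by
        have := hu.2
        nlinarith [Real.sqrt_nonneg (ro ^ 2 - re ^ 2)]
      rwa [Real.sq_sqrt hsq] at h2
    rw [hAdef, hcdef, div_le_div_iff₀ hro0 (by positivity)]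
    nlinarith
  have hA1 : ∀ u ∈ S, A u ≤ 1 := by
    intro u hu
    have h1 : ro - re ≤ u := hu.1
    have h0 : (0:ℝ) < ro - re := by linarith
    have : (ro - re) ^ 2 ≤ u ^ 2 := by nlinarith
    rw [hAdef, div_le_one (by positivity)]
    nlinarith
  have hcosκ : ∀ u ∈ S, Real.cos (capAngle ro re u) = A u := by
    intro u hu
    exact Real.cos_arccos (by linarith [hAc u hu]) (hA1 u hu)
  have hκle : ∀ u ∈ S, capAngle ro re u ≤ Real.arccos c := by
    intro u hu
    exact _root_.antitone_arccos (hAc u hu)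
  have hκhalf : Real.arccos c < π / 2 := Real.arccos_lt_pi_div_two.2 hc0
  have hκ0 : ∀ u, 0 ≤ capAngle ro re u := fun u => Real.arccos_nonneg _
  -- cos v ≥ cos κ(u) ≥ c on [0, κ(u)]
  have hcosv : ∀ u ∈ S, ∀ v ∈ Set.Icc 0 (capAngle ro re u), A u ≤ Real.cos v := by
    intro u hu v hv
    rw [← hcosκ u hu]
    exact Real.cos_le_cos_of_nonneg_of_le_pi hv.1 (Real.arccos_le_pi _) hv.2
  -- the modified, globally continuous integrand
  set g : ℝ → ℝ → ℝ := fun a v => Real.cos v * (1 - Real.exp (-(mu / π) *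
      Real.arcsin (Real.sqrt (1 - a ^ 2 * (1 / max (Real.cos v) c) ^ 2)))) with hgdef
  have hgcont : Continuous (Function.uncurry g) := by
    have hmax : Continuous fun p : ℝ × ℝ => max (Real.cos p.2) c :=
      (Real.continuous_cos.comp continuous_snd).max continuous_const
    have hmaxne : ∀ p : ℝ × ℝ, max (Real.cos p.2) c ≠ 0 :=
      fun p => ne_of_gt (lt_of_lt_of_le hc0 (le_max_right _ _))
    apply ((Real.continuous_cos.comp continuous_snd).mul _)
    apply (continuous_const.sub _)
    apply Real.continuous_exp.comp
    apply Continuous.mul continuous_const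
    apply Real.continuous_arcsin.comp
    apply Real.continuous_sqrt.comp
    apply continuous_const.sub
    exact ((continuous_fst.pow 2).mul
      (((continuous_const.div hmax hmaxne)).pow 2))
  -- congruence : on S the CDF equals the nicer function
  have hcongr : ∀ u ∈ S,
      nearestCDF lam mu ro re u =
        1 - Real.exp (-(lam * ∫ v in (0:ℝ)..(Real.arccos (A u)), g (A u) v)) := by
    intro u hu
    have hκ : capAngle ro re u = Real.arccos (A u) := rfl
    have hintEq : (∫ v in (0:ℝ)..(Real.arccos (A u)),
        Real.cos v * (1 - Real.exp (-(mu / π) *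
          Real.arcsin (Real.sqrt (1 - Real.cos (capAngle ro re u) ^ 2 * (1 / Real.cos v) ^ 2)))))
        = ∫ v in (0:ℝ)..(Real.arccos (A u)), g (A u) v := by
      apply intervalIntegral.integral_congr
      intro v hv
      rw [Set.uIcc_of_le (by rw [← hκ]; exact hκ0 u)] at hv
      have hcv : A u ≤ Real.cos v := hcosv u hu v (by rwa [hκ])
      have hmax : max (Real.cos v) c = Real.cos v := max_eq_left (le_trans (hAc u hu) hcv)
      simp only [hgdef, hcosκ u hu, hmax]
    unfold nearestCDF
    rw [hκ] at hintEq ⊢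
    rw [hintEq]
  -- nonnegativity of integrands
  have hga : ∀ a : ℝ, Continuous (g a) := fun a =>
    show Continuous (fun v => Function.uncurry g (a, v)) from
      hgcont.comp (Continuous.prodMk continuous_const continuous_id)
  have hfact0 : ∀ x : ℝ, 0 ≤ (1 : ℝ) - Real.exp (-(mu / π) * Real.arcsin (Real.sqrt x)) := by
    intro x
    have h1 : -(mu / π) * Real.arcsin (Real.sqrt x) ≤ 0 := by
      have := Real.arcsin_nonneg.2 (Real.sqrt_nonneg x)
      have hmp : 0 ≤ mu / π := le_of_lt (div_pos hmu Real.pi_pos)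
      nlinarith
    have := Real.exp_le_one_iff.2 h1
    linarith
  refine ⟨?_, ?_, ?_, ?_⟩
  · -- continuity
    have hAcont : Continuous A := by
      apply Continuous.div (continuous_const.sub (continuous_pow 2)) continuous_const
      intro _; positivity
    have hInt : Continuous fun u => ∫ v in (0:ℝ)..(Real.arccos (A u)), g (A u) v := by
      have : Continuous (Function.uncurry fun (u : ℝ) (v : ℝ) => g (A u) v) := by
        exact hgcont.comp ((hAcont.comp continuous_fst).prodMk continuous_snd)
      exact intervalIntegral.continuous_parametric_intervalIntegral_of_continuous
        (f := fun u v => g (A u) v) this (Real.continuous_arccos.comp hAcont)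
    have : ContinuousOn
        (fun u => 1 - Real.exp (-(lam * ∫ v in (0:ℝ)..(Real.arccos (A u)), g (A u) v))) S :=
      (continuous_const.sub (Real.continuous_exp.comp
        ((continuous_const.mul hInt).neg))).continuousOn
    exact this.congr hcongr
  · -- monotonicity
    intro u₁ hu₁ u₂ hu₂ h12
    rw [hcongr u₁ hu₁, hcongr u₂ hu₂]
    have hA21 : A u₂ ≤ A u₁ := by
      have h0 : 0 ≤ u₁ := le_trans (by linarith) hu₁.1
      apply div_le_div_of_nonneg_right ?_ (by positivity) |>.trans_eq rfl
      · nlinarith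
    have hκ12 : Real.arccos (A u₁) ≤ Real.arccos (A u₂) := _root_.antitone_arccos hA21
    -- continuity of v ↦ g a v on the relevant interval where cos v ≥ c
    have hint2 : IntervalIntegrable (g (A u₂)) MeasureTheory.volume 0 (Real.arccos (A u₂)) :=
      (hga _).intervalIntegrable _ _
    have hint1 : IntervalIntegrable (g (A u₂)) MeasureTheory.volume 0 (Real.arccos (A u₁)) :=
      (hga _).intervalIntegrable _ _
    have hint1' : IntervalIntegrable (g (A u₁)) MeasureTheory.volume 0 (Real.arccos (A u₁)) :=
      (hga _).intervalIntegrable _ _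
    have hg2nonneg : ∀ v ∈ Set.Icc (0:ℝ) (Real.arccos (A u₂)), 0 ≤ g (A u₂) v := by
      intro v hv
      have hcv : (0:ℝ) ≤ Real.cos v := by
        apply Real.cos_nonneg_of_mem_Icc
        constructor
        · linarith [hv.1, Real.pi_pos]
        · exact hv.2.trans (le_of_lt (lt_of_le_of_lt (hκle u₂ hu₂) hκhalf))
      exact mul_nonneg hcv (hfact0 _)
    have step1 : (∫ v in (0:ℝ)..(Real.arccos (A u₁)), g (A u₁) v)
        ≤ ∫ v in (0:ℝ)..(Real.arccos (A u₁)), g (A u₂) v := by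
      apply intervalIntegral.integral_mono_on (Real.arccos_nonneg _) hint1' hint1
      intro v hv
      have hcv : (0:ℝ) ≤ Real.cos v := by
        apply Real.cos_nonneg_of_mem_Icc
        constructor
        · linarith [hv.1, Real.pi_pos]
        · exact hv.2.trans ((hκle u₁ hu₁).trans hκhalf.le)
      apply mul_le_mul_of_nonneg_left ?_ hcv
      apply sub_le_sub_left
      apply Real.exp_le_exp.2
      have hA20 : 0 ≤ A u₂ := le_trans hc0.le (hAc u₂ hu₂)
      have hsqle : Real.sqrt (1 - A u₁ ^ 2 * (1 / max (Real.cos v) c) ^ 2)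
          ≤ Real.sqrt (1 - A u₂ ^ 2 * (1 / max (Real.cos v) c) ^ 2) := by
        apply Real.sqrt_le_sqrt
        have : A u₂ ^ 2 ≤ A u₁ ^ 2 := by nlinarith
        nlinarith [sq_nonneg (1 / max (Real.cos v) c)]
      have := Real.monotone_arcsin hsqle
      have hmp : 0 ≤ mu / π := le_of_lt (div_pos hmu Real.pi_pos)
      nlinarith
    have step2 : (∫ v in (0:ℝ)..(Real.arccos (A u₁)), g (A u₂) v)
        ≤ ∫ v in (0:ℝ)..(Real.arccos (A u₂)), g (A u₂) v := by
      apply intervalIntegral.integral_mono_interval le_rfl (Real.arccos_nonneg _) hκ12 ?_ hint2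
      filter_upwards [MeasureTheory.ae_restrict_mem measurableSet_Ioc] with v hv
      exact hg2nonneg v ⟨hv.1.le, hv.2⟩
    have hI : (∫ v in (0:ℝ)..(Real.arccos (A u₁)), g (A u₁) v)
        ≤ ∫ v in (0:ℝ)..(Real.arccos (A u₂)), g (A u₂) v := step1.trans step2
    have := Real.exp_le_exp.2 (neg_le_neg (mul_le_mul_of_nonneg_left hI hlam.le))
    linarith
  · -- lower endpoint
    have hnum : ro ^ 2 + re ^ 2 - (ro - re) ^ 2 = 2 * ro * re := by ring
    have : capAngle ro re (ro - re) = 0 := by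
      unfold capAngle
      rw [hnum, div_self (by positivity)]
      exact Real.arccos_one
    unfold nearestCDF
    rw [this]
    simp
  · -- defect
    unfold nearestCDF
    have := Real.exp_pos (-(lam * ∫ v in (0:ℝ)..(capAngle ro re (Real.sqrt (ro ^ 2 - re ^ 2))),
      Real.cos v * (1 - Real.exp (-(mu / π) *
        Real.arcsin (Real.sqrt (1 - Real.cos (capAngle ro re (Real.sqrt (ro ^ 2 - re ^ 2))) ^ 2 * (1 / Real.cos v) ^ 2))))))
    linarith
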